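/- Let (U, 𝒮) be a laminar set system, let S be a set of non-singleton members of 𝒮, and let (A, B) be a bi-colouring identifying S. Then for every s ∈ S, the number of children c of s for which |(A ∪ B) ∩ c| is odd is exactly 2, while for every non-singleton member x ∈ 𝒮 with x ∉ S, the number of children c of x for which |(A ∪ B) ∩ c| is odd is at most 1. -/

import Mathlib

variable {α : Type*} [DecidableEq α] [Fintype α]

/-- A set system on the finite universe `α`: `∅ ∉ 𝒮`, `univ ∈ 𝒮`, all singletons in `𝒮`. -/
def IsSetSystem (𝒮 : Finset (Finset α)) : Prop :=
  (∅ : Finset α) ∉ 𝒮 ∧ Finset.univ ∈ 𝒮 ∧ ∀ a : α, ({a} : Finset α) ∈ 𝒮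

/-- Two sets overlap: non-disjoint and neither contains the other. -/
def Overlap (X Y : Finset α) : Prop :=
  (X ∩ Y).Nonempty ∧ ¬ X ⊆ Y ∧ ¬ Y ⊆ X

/-- A set system is laminar when no two members overlap. -/
def IsLaminar (𝒮 : Finset (Finset α)) : Prop :=
  ∀ X ∈ 𝒮, ∀ Y ∈ 𝒮, ¬ Overlap X Y

/-- `c` is a child of `x` in the laminar tree: a ⊆-maximal proper subset of `x` in `𝒮`. -/
def IsChild (𝒮 : Finset (Finset α)) (c x : Finset α) : Prop :=
  c ∈ 𝒮 ∧ c ⊂ x ∧ ∀ y ∈ 𝒮, y ⊂ x → c ⊆ y → y = c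

/-- `p` is the parent of `x`: the ⊆-minimal member of `𝒮` properly containing `x`. -/
def IsParent (𝒮 : Finset (Finset α)) (p x : Finset α) : Prop :=
  p ∈ 𝒮 ∧ x ⊂ p ∧ ∀ y ∈ 𝒮, x ⊂ y → p ⊆ y

/-- `(π, σ)` identifies `S`: a pair of injections on `S` such that each `s ∈ S` is the
⊆-minimal member of `𝒮` containing both `π s` and `σ s`. -/
def Identifies (𝒮 S : Finset (Finset α)) (π σ : Finset α → α) : Prop :=
  Set.InjOn π ↑S ∧ Set.InjOn σ ↑S ∧
  ∀ s ∈ S, π s ∈ s ∧ σ s ∈ s ∧ ∀ y ∈ 𝒮, π s ∈ y → σ s ∈ y → s ⊆ y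

/-- `x` is `s`-requested in `(π, σ)` (for `s ∈ S`): `x ⊆ s` and `π s ∈ x` or `σ s ∈ x`. -/
def Requested (S : Finset (Finset α)) (π σ : Finset α → α) (s x : Finset α) : Prop :=
  s ∈ S ∧ x ⊆ s ∧ (π s ∈ x ∨ σ s ∈ x)

/-- `(π, σ)` has unique request: every member of `𝒮` is `s`-requested for at most one `s ∈ S`. -/
def UniqueRequest (𝒮 S : Finset (Finset α)) (π σ : Finset α → α) : Prop :=
  ∀ x ∈ 𝒮, ∀ s s' : Finset α,
    Requested S π σ s x → Requested S π σ s' x → s = s'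

/-- The bi-colouring `(A, B)` (disjoint, equal cardinality) identifies `S`. -/
def BicolIdentifies (𝒮 S : Finset (Finset α)) (A B : Finset α) : Prop :=
  Disjoint A B ∧ A.card = B.card ∧
  ∃ π σ : Finset α → α, Identifies 𝒮 S π σ ∧ UniqueRequest 𝒮 S π σ ∧
    S.image π = A ∧ S.image σ = B

/-- `X` is a thin set of inner nodes: for every non-root `x ∈ X`, the parent of `x` is not
in `X` and `x` has a sibling not in `X`. -/
def Thin (𝒮 X : Finset (Finset α)) : Prop :=
  ∀ x ∈ X, x ≠ Finset.univ →
    (∀ p : Finset α, IsParent 𝒮 p x → p ∉ X) ∧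
    ∃ y p : Finset α, y ≠ x ∧ IsChild 𝒮 x p ∧ IsChild 𝒮 y p ∧ y ∉ X


/-!
Since `π` and `σ` are injective with disjoint images, `|(A ∪ B) ∩ c|` counts the indices
`s ∈ S` with `π s ∈ c` plus those with `σ s ∈ c`. By laminarity exactly one of `π s`, `σ s`
lies in `c ∈ 𝒮` precisely when `c` is `s`-requested and `c ≠ s` (both lying in `c` forces
`s ⊆ c`), and unique request leaves at most one such `s`. Hence a child `c` of `x` has odd
intersection iff `x` is `s`-requested and `c` contains `π s` or `σ s`, for some `s`.
For `x = s ∈ S` the only such `s` is `s` itself, giving the two distinct children through `π s`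
and `σ s`. For `x ∉ S` all odd children come from one `s`; two distinct ones would put both
`π s` and `σ s` into `x`, forcing `x = s ∈ S`.
-/

theorem Finset.card_image_inter_of_injOn {β γ : Type*} [DecidableEq γ] {S : Finset β}
    {f : β → γ} (hf : Set.InjOn f S) (c : Finset γ) :
    (S.image f ∩ c).card = ∑ s ∈ S, if f s ∈ c then 1 else 0 := by
  rw [← Finset.card_filter,
    ← Finset.card_image_of_injOn (hf.mono (Finset.coe_subset.2 (Finset.filter_subset _ _))),
    ← Finset.filter_image (p := (· ∈ c)), Finset.filter_mem_eq_inter]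

section Laminar

omit [Fintype α]

variable {𝒮 : Finset (Finset α)}

theorem IsLaminar.subset_or_subset (hlam : IsLaminar 𝒮) {X Y : Finset α} (hX : X ∈ 𝒮)
    (hY : Y ∈ 𝒮) {a : α} (haX : a ∈ X) (haY : a ∈ Y) : X ⊆ Y ∨ Y ⊆ X := by
  by_contra! h
  exact hlam X hX Y hY ⟨⟨a, Finset.mem_inter.2 ⟨haX, haY⟩⟩, h⟩

theorem exists_isChild_mem (hsing : ∀ a : α, ({a} : Finset α) ∈ 𝒮) {x : Finset α} {a : α}
    (ha : a ∈ x) (hx : x ≠ {a}) : ∃ c, IsChild 𝒮 c x ∧ a ∈ c := by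
  have hne : (𝒮.filter fun y => y ⊂ x ∧ a ∈ y).Nonempty :=
    ⟨{a}, Finset.mem_filter.2 ⟨hsing a,
      Finset.ssubset_iff_subset_ne.2 ⟨Finset.singleton_subset_iff.2 ha, hx.symm⟩,
      Finset.mem_singleton_self a⟩⟩
  obtain ⟨c, hc⟩ := Finset.exists_maximal hne
  obtain ⟨hc𝒮, hcx, hac⟩ := Finset.mem_filter.1 hc.prop
  exact ⟨c, ⟨hc𝒮, hcx, fun y hy hyx hcy =>
    (hc.le_of_ge (Finset.mem_filter.2 ⟨hy, hyx, hcy hac⟩) hcy).antisymm hcy⟩, hac⟩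

theorem IsChild.eq_of_mem (hlam : IsLaminar 𝒮) {c c' x : Finset α} (hc : IsChild 𝒮 c x)
    (hc' : IsChild 𝒮 c' x) {a : α} (ha : a ∈ c) (ha' : a ∈ c') : c = c' := by
  rcases hlam.subset_or_subset hc.1 hc'.1 ha ha' with h | h
  · exact (hc.2.2 c' hc'.1 hc'.2.1 h).symm
  · exact hc'.2.2 c hc.1 hc.2.1 h

theorem IsChild.subset_of_ssubset (hlam : IsLaminar 𝒮) {c x y : Finset α} (hc : IsChild 𝒮 c x)
    (hx : x ∈ 𝒮) (hy : y ∈ 𝒮) (hcy : c ⊂ y) {a : α} (ha : a ∈ c) : x ⊆ y := by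
  rcases hlam.subset_or_subset hx hy (hc.2.1.subset ha) (hcy.subset ha) with h | h
  · exact h
  · obtain rfl | hyx := h.eq_or_ssubset
    · exact subset_rfl
    · exact absurd (hc.2.2 y hy hyx hcy.subset) hcy.ne'

end Laminar

section Requests

omit [Fintype α]

variable {𝒮 S : Finset (Finset α)} {π σ : Finset α → α}

theorem Requested.of_isChild (hlam : IsLaminar 𝒮) {c x s : Finset α} (hc : IsChild 𝒮 c x)
    (hx : x ∈ 𝒮) (hs : s ∈ 𝒮) (hreq : Requested S π σ s c) (hcs : c ≠ s) :
    Requested S π σ s x := by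
  obtain ⟨hsS, hcs', hpt⟩ := hreq
  obtain ⟨a, ha⟩ : ∃ a, a ∈ c := hpt.elim (⟨_, ·⟩) (⟨_, ·⟩)
  exact ⟨hsS, hc.subset_of_ssubset hlam hx hs (hcs'.ssubset_of_ne hcs) ha,
    hpt.imp (hc.2.1.subset ·) (hc.2.1.subset ·)⟩

theorem Identifies.odd_count_iff (hlam : IsLaminar 𝒮) (hid : Identifies 𝒮 S π σ)
    (hS𝒮 : S ⊆ 𝒮) {s c : Finset α} (hs : s ∈ S) (hc : c ∈ 𝒮) :
    Odd ((if π s ∈ c then 1 else 0) + (if σ s ∈ c then 1 else 0)) ↔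
      Requested S π σ s c ∧ c ≠ s := by
  obtain ⟨hπs, hσs, hmin⟩ := hid.2.2 s hs
  have hnest : ∀ {a}, a ∈ c → a ∈ s → c ⊆ s ∨ s ⊆ c := hlam.subset_or_subset hc (hS𝒮 hs)
  by_cases h1 : π s ∈ c <;> by_cases h2 : σ s ∈ c
  · simp only [h1, h2, ↓reduceIte]
    exact iff_of_false (by decide) fun ⟨⟨_, hcs, _⟩, hne⟩ => hne (hcs.antisymm (hmin c hc h1 h2))
  · have hcs := (hnest h1 hπs).resolve_right fun h => h2 (h hσs)
    simp only [h1, h2, ↓reduceIte]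
    exact iff_of_true (by decide) ⟨⟨hs, hcs, Or.inl h1⟩, by rintro rfl; exact h2 hσs⟩
  · have hcs := (hnest h2 hσs).resolve_right fun h => h1 (h hπs)
    simp only [h1, h2, ↓reduceIte]
    exact iff_of_true (by decide) ⟨⟨hs, hcs, Or.inr h2⟩, by rintro rfl; exact h1 hπs⟩
  · simp [Requested, h1, h2]

theorem odd_card_inter_iff (hlam : IsLaminar 𝒮) (hid : Identifies 𝒮 S π σ)
    (hur : UniqueRequest 𝒮 S π σ) (hS𝒮 : S ⊆ 𝒮) (hd : Disjoint (S.image π) (S.image σ))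
    {c : Finset α} (hc : c ∈ 𝒮) :
    Odd ((S.image π ∪ S.image σ) ∩ c).card ↔ ∃ s, Requested S π σ s c ∧ c ≠ s := by
  classical
  have hodd_iff : ∀ T : Finset (Finset α), T.card ≤ 1 → (Odd T.card ↔ T.Nonempty) := by
    intro T hT
    rw [Nat.odd_iff, ← Finset.card_pos]
    omega
  rw [Finset.union_inter_distrib_right, Finset.card_union_of_disjoint
      (hd.mono Finset.inter_subset_left Finset.inter_subset_left),
    Finset.card_image_inter_of_injOn hid.1, Finset.card_image_inter_of_injOn hid.2.1,
    ← Finset.sum_add_distrib, Finset.odd_sum_iff_odd_card_odd,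
    Finset.filter_congr fun s hs => hid.odd_count_iff hlam hS𝒮 hs hc]
  rw [hodd_iff _ (Finset.card_le_one.2 fun s hs s' hs' =>
    hur c hc s s' (Finset.mem_filter.1 hs).2.1 (Finset.mem_filter.1 hs').2.1),
    Finset.filter_nonempty_iff]
  exact ⟨fun ⟨s, _, h⟩ => ⟨s, h⟩, fun ⟨s, h⟩ => ⟨s, h.1.1, h⟩⟩

theorem IsChild.odd_card_inter_iff (hlam : IsLaminar 𝒮) (hid : Identifies 𝒮 S π σ)
    (hur : UniqueRequest 𝒮 S π σ) (hS𝒮 : S ⊆ 𝒮) (hd : Disjoint (S.image π) (S.image σ))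
    {c x : Finset α} (hc : IsChild 𝒮 c x) (hx : x ∈ 𝒮) :
    Odd ((S.image π ∪ S.image σ) ∩ c).card ↔
      ∃ s, Requested S π σ s x ∧ (π s ∈ c ∨ σ s ∈ c) := by
  rw [_root_.odd_card_inter_iff hlam hid hur hS𝒮 hd hc.1]
  constructor
  · rintro ⟨s, hreq, hcs⟩
    exact ⟨s, hreq.of_isChild hlam hc hx (hS𝒮 hreq.1) hcs, hreq.2.2⟩
  · rintro ⟨s, hreq, hpt⟩
    exact ⟨s, ⟨hreq.1, hc.2.1.subset.trans hreq.2.1, hpt⟩,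
      (Finset.ssubset_of_ssubset_of_subset hc.2.1 hreq.2.1).ne⟩

end Requests

section Counting

variable {𝒮 S : Finset (Finset α)} {π σ : Finset α → α}

omit [Fintype α] in
theorem ncard_odd_children_of_mem (hsing : ∀ a : α, ({a} : Finset α) ∈ 𝒮)
    (hlam : IsLaminar 𝒮) (hid : Identifies 𝒮 S π σ) (hur : UniqueRequest 𝒮 S π σ)
    (hS𝒮 : S ⊆ 𝒮) (hd : Disjoint (S.image π) (S.image σ)) {s : Finset α} (hs : s ∈ S)
    (hs_ne : ∀ a : α, s ≠ {a}) :
    {c : Finset α | IsChild 𝒮 c s ∧ Odd ((S.image π ∪ S.image σ) ∩ c).card}.ncard = 2 := by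
  obtain ⟨hπs, hσs, hmin⟩ := hid.2.2 s hs
  obtain ⟨cπ, hcπ, hπc⟩ := exists_isChild_mem hsing hπs (hs_ne _)
  obtain ⟨cσ, hcσ, hσc⟩ := exists_isChild_mem hsing hσs (hs_ne _)
  have hself : Requested S π σ s s := ⟨hs, subset_rfl, Or.inl hπs⟩
  have hne : cπ ≠ cσ := fun h => hcπ.2.1.not_subset (hmin cπ hcπ.1 hπc (h ▸ hσc))
  convert Set.ncard_pair hne
  ext c
  simp only [Set.mem_ofPred_eq, Set.mem_insert_iff, Set.mem_singleton_iff]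
  constructor
  · rintro ⟨hc, hodd⟩
    obtain ⟨s', hreq, hpt⟩ := (hc.odd_card_inter_iff hlam hid hur hS𝒮 hd (hS𝒮 hs)).1 hodd
    obtain rfl := hur s (hS𝒮 hs) s' s hreq hself
    exact hpt.imp (hc.eq_of_mem hlam hcπ · hπc) (hc.eq_of_mem hlam hcσ · hσc)
  · rintro (rfl | rfl)
    · exact ⟨hcπ, (hcπ.odd_card_inter_iff hlam hid hur hS𝒮 hd (hS𝒮 hs)).2
        ⟨s, hself, Or.inl hπc⟩⟩
    · exact ⟨hcσ, (hcσ.odd_card_inter_iff hlam hid hur hS𝒮 hd (hS𝒮 hs)).2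
        ⟨s, hself, Or.inr hσc⟩⟩

theorem ncard_odd_children_le_one (hlam : IsLaminar 𝒮) (hid : Identifies 𝒮 S π σ)
    (hur : UniqueRequest 𝒮 S π σ) (hS𝒮 : S ⊆ 𝒮) (hd : Disjoint (S.image π) (S.image σ))
    {x : Finset α} (hx : x ∈ 𝒮) (hxS : x ∉ S) :
    {c : Finset α | IsChild 𝒮 c x ∧ Odd ((S.image π ∪ S.image σ) ∩ c).card}.ncard ≤ 1 := by
  rw [Set.ncard_le_one]
  rintro c ⟨hc, hodd⟩ c' ⟨hc', hodd'⟩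
  obtain ⟨s, hreq, hpt⟩ := (hc.odd_card_inter_iff hlam hid hur hS𝒮 hd hx).1 hodd
  obtain ⟨s', hreq', hpt'⟩ := (hc'.odd_card_inter_iff hlam hid hur hS𝒮 hd hx).1 hodd'
  obtain rfl := hur x hx s s' hreq hreq'
  have hsplit : ∀ {d d'}, IsChild 𝒮 d x → IsChild 𝒮 d' x → π s ∈ d → σ s ∈ d' → False := by
    intro d d' hd hd' hπ hσ
    have hxs : x = s :=
      hreq.2.1.antisymm ((hid.2.2 s hreq.1).2.2 x hx (hd.2.1.subset hπ) (hd'.2.1.subset hσ))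
    exact hxS (hxs ▸ hreq.1)
  rcases hpt with h | h <;> rcases hpt' with h' | h'
  · exact hc.eq_of_mem hlam hc' h h'
  · exact (hsplit hc hc' h h').elim
  · exact (hsplit hc' hc h' h).elim
  · exact hc.eq_of_mem hlam hc' h h'

end Counting

/-- For `(A, B)` identifying `S`: every `s ∈ S` has exactly `2` children `c` with
`|(A ∪ B) ∩ c|` odd, and every non-singleton member `x ∉ S` has at most `1` such child. -/
theorem stmt_9 (𝒮 : Finset (Finset α)) (hsys : IsSetSystem 𝒮) (hlam : IsLaminar 𝒮)
    (S : Finset (Finset α)) (hS : ∀ x ∈ S, x ∈ 𝒮 ∧ ∀ a : α, x ≠ {a})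
    (A B : Finset α) (hAB : BicolIdentifies 𝒮 S A B) :
    (∀ s ∈ S,
      {c : Finset α | IsChild 𝒮 c s ∧ Odd ((A ∪ B) ∩ c).card}.ncard = 2) ∧
    (∀ x ∈ 𝒮, (∀ a : α, x ≠ {a}) → x ∉ S →
      {c : Finset α | IsChild 𝒮 c x ∧ Odd ((A ∪ B) ∩ c).card}.ncard ≤ 1) := by
  obtain ⟨hd, -, π, σ, hid, hur, rfl, rfl⟩ := hAB
  have hS𝒮 : S ⊆ 𝒮 := fun x hx => (hS x hx).1
  exact ⟨fun s hs => ncard_odd_children_of_mem hsys.2.2 hlam hid hur hS𝒮 hd hs (hS s hs).2,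
    fun x hx _ hxS => ncard_odd_children_le_one hlam hid hur hS𝒮 hd hx hxS⟩
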